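/- arXiv:1307.1222 — 9 statements merged into one kernel-verified Lean document; each statement's English description precedes it below -/
import Mathlib

section
/- Let X = {x_1,...,x_n} ⊂ ℝ² and let s* be the unique minimiser of P(s) = Σ_i ‖s - x_i‖² + max_i ‖s - x_i‖². Then s* lies in the convex hull of the 2-centroids {M_1,...,M_n}, where M_j = (1/(n+1))(x_j + Σ_i x_i). -/
/-!
Each term `Σ i, ‖t - x i‖ ^ 2 + ‖t - x j‖ ^ 2` of the maximum defining `P` is, by the parallel-axis
theorem, `(n + 1) * ‖t - M j‖ ^ 2` plus a constant, so it strictly increases with the distance from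
`t` to `M j`. If `s*` were outside the convex hull `K` of the `M j`, its metric projection `p` onto
`K` would make an obtuse angle `s* p M j` with every `M j`, hence be strictly closer than `s*` to all
of them, and `P p < P s*` would follow.
-/

open Finset

section
variable {E : Type*} [NormedAddCommGroup E] [InnerProductSpace ℝ E] {ι : Type*} [Fintype ι]

theorem norm_sub_sq_add_norm_sub_sq_le_of_inner_le_zero {s p m : E}
    (h : inner ℝ (s - p) (m - p) ≤ 0) : ‖s - p‖ ^ 2 + ‖p - m‖ ^ 2 ≤ ‖s - m‖ ^ 2 := by
  have hsplit : s - m = (s - p) + (p - m) := by abel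
  have hneg : inner ℝ (s - p) (p - m) = -inner ℝ (s - p) (m - p) := by
    rw [← inner_neg_right, neg_sub]
  rw [hsplit, norm_add_sq_real, hneg]
  linarith

theorem Convex.exists_forall_norm_sub_lt_of_notMem {K : Set E} (hconv : Convex ℝ K)
    (hne : K.Nonempty) (hcomplete : IsComplete K) {s : E} (hs : s ∉ K) :
    ∃ p ∈ K, ∀ m ∈ K, ‖p - m‖ < ‖s - m‖ := by
  obtain ⟨p, hpK, hp⟩ := exists_norm_eq_iInf_of_complete_convex hne hcomplete hconv s
  have hobtuse := (norm_eq_iInf_iff_real_inner_le_zero hconv hpK).mp hp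
  have hsp : 0 < ‖s - p‖ := norm_pos_iff.mpr (sub_ne_zero.mpr fun h => hs (h ▸ hpK))
  refine ⟨p, hpK, fun m hm => ?_⟩
  have := norm_sub_sq_add_norm_sub_sq_le_of_inner_le_zero (hobtuse m hm)
  nlinarith [norm_nonneg (p - m), norm_nonneg (s - m)]

theorem mem_convexHull_range_of_forall_sup'_le [Nonempty ι]
    (m : ι → E) (f : ι → E → ℝ) (hf : ∀ j t t', ‖t - m j‖ < ‖t' - m j‖ → f j t < f j t')
    {s : E} (hs : ∀ t, univ.sup' univ_nonempty (f · s) ≤ univ.sup' univ_nonempty (f · t)) :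
    s ∈ convexHull ℝ (Set.range m) := by
  by_contra hsK
  obtain ⟨p, -, hp⟩ := (convex_convexHull ℝ (Set.range m)).exists_forall_norm_sub_lt_of_notMem
    ((Set.range_nonempty m).mono (subset_convexHull ℝ _))
    ((Set.finite_range m).isCompact_convexHull ℝ).isComplete hsK
  have hlt : univ.sup' univ_nonempty (f · p) < univ.sup' univ_nonempty (f · s) :=
    (sup'_lt_iff _).mpr fun j _ => (hf j p s (hp (m j) (subset_convexHull ℝ _ ⟨j, rfl⟩))).trans_le
      (le_sup' (f · s) (mem_univ j))
  exact (hs p).not_gt hlt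

theorem sum_norm_sub_sq_eq_card_mul_norm_sub_mean_sq_add (y : ι → E) (t : E) :
    ∑ i, ‖t - y i‖ ^ 2 = Fintype.card ι * ‖t - (Fintype.card ι : ℝ)⁻¹ • ∑ i, y i‖ ^ 2
      + ∑ i, ‖(Fintype.card ι : ℝ)⁻¹ • ∑ i, y i - y i‖ ^ 2 := by
  set c := (Fintype.card ι : ℝ)⁻¹ • ∑ i, y i
  have hbalanced : ∑ i, (c - y i) = 0 := by
    rcases isEmpty_or_nonempty ι with hι | hι
    · exact Fintype.sum_empty _
    · rw [sum_sub_distrib, sum_const, card_univ, ← Nat.cast_smul_eq_nsmul ℝ,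
        smul_inv_smul₀ (by positivity), sub_self]
  have hsplit : ∀ i,
      ‖t - y i‖ ^ 2 = ‖t - c‖ ^ 2 + 2 * inner ℝ (t - c) (c - y i) + ‖c - y i‖ ^ 2 := by
    intro i
    rw [← norm_add_sq_real, sub_add_sub_cancel]
  simp only [hsplit, sum_add_distrib, ← mul_sum, ← inner_sum, hbalanced, inner_zero_right,
    sum_const, card_univ, nsmul_eq_mul]
  ring

theorem sum_norm_sub_sq_lt_of_norm_sub_mean_lt [Nonempty ι] (y : ι → E) {t t' : E}
    (h : ‖t - (Fintype.card ι : ℝ)⁻¹ • ∑ i, y i‖ < ‖t' - (Fintype.card ι : ℝ)⁻¹ • ∑ i, y i‖) :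
    ∑ i, ‖t - y i‖ ^ 2 < ∑ i, ‖t' - y i‖ ^ 2 := by
  rw [sum_norm_sub_sq_eq_card_mul_norm_sub_mean_sq_add y t,
    sum_norm_sub_sq_eq_card_mul_norm_sub_mean_sq_add y t']
  gcongr

end

/-- The quadratic min-power centre `s*` lies in the convex hull of the 2-centroids. -/
theorem minPower_centre_mem_convexHull_two_centroids
    {n : ℕ} [NeZero n] (x : Fin n → EuclideanSpace ℝ (Fin 2))
    (P : EuclideanSpace ℝ (Fin 2) → ℝ)
    (hP : ∀ s, P s = (∑ i, ‖s - x i‖ ^ 2) +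
      Finset.univ.sup' Finset.univ_nonempty (fun i => ‖s - x i‖ ^ 2))
    (Mc : Fin n → EuclideanSpace ℝ (Fin 2))
    (hMc : ∀ j, Mc j = ((n : ℝ) + 1)⁻¹ • (x j + ∑ i, x i))
    (s : EuclideanSpace ℝ (Fin 2)) (hs : ∀ t, P s ≤ P t) :
    s ∈ convexHull ℝ (Set.range Mc) := by
  let f j t := ‖t - x j‖ ^ 2 + ∑ i, ‖t - x i‖ ^ 2
  have hPf : ∀ t, P t = univ.sup' univ_nonempty (f · t) := by
    intro t
    rw [hP, add_sup']
    simp only [f, add_comm]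
  refine mem_convexHull_range_of_forall_sup'_le Mc f (fun j t t' h => ?_) fun t => ?_
  · -- `f j` sums the squared distances to the `n + 1` points `x j, x 0, …, x (n - 1)`, of mean `Mc j`.
    have := sum_norm_sub_sq_lt_of_norm_sub_mean_lt (fun o : Option (Fin n) => o.elim (x j) x)
      (t := t) (t' := t')
    simp only [Fintype.sum_option, Option.elim, Fintype.card_option, Fintype.card_fin,
      Nat.cast_succ, ← hMc] at this
    exact this h
  · simpa only [hPf] using hs t
end

section
/- Let X = {x_1,...,x_n} ⊂ ℝ². A point s is the minimiser of P(s) = Σ_i ‖s - x_i‖² + max_i ‖s - x_i‖² if and only if there exist nonnegative multipliers λ_1,...,λ_n summing to 1 such that s = Σ_j λ_j M_j and, for each j with λ_j > 0, ‖s - x_j‖ = max_i ‖s - x_i‖, where M_j = (1/(n+1))(x_j + Σ_i x_i). -/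
/-!
Put `q j t = ∑ i, ‖t - x i‖² + ‖t - x j‖²`, so that `P = max_j q j`. By the parallel axis theorem
for the `n + 1` points `x₁, …, xₙ, x_j`, `q j t = (n + 1) ‖t - M_j‖² + c_j`: all pieces have the
same curvature, and `q j t - q j s = (n + 1) (‖t - s‖² - 2 ⟪t - s, M_j - s⟫)`. Hence `s` is not a
minimiser exactly when some direction `d` has `⟪d, M_j - s⟫ > 0` for every `j` active at `s`:
moving along `d` lowers the active pieces, and the inactive ones stay below `P s` by continuity.
Projecting `s` onto the convex hull of the active `M_j` yields such a `d` whenever `s` lies outside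
that hull; the multipliers `λ_j` are convex weights of `s` in it.
-/

open Finset Filter Topology
open scoped InnerProductSpace

section InnerProductSpace

variable {E : Type*} [NormedAddCommGroup E] [InnerProductSpace ℝ E]

theorem exists_forall_inner_sub_pos_of_notMem {K : Set E} (hne : K.Nonempty)
    (hcomplete : IsComplete K) (hconvex : Convex ℝ K) {s : E} (hs : s ∉ K) :
    ∃ d : E, ∀ m ∈ K, 0 < ⟪d, m - s⟫_ℝ := by
  obtain ⟨v, hv, hnearest⟩ := exists_norm_eq_iInf_of_complete_convex hne hcomplete hconvex s
  have hobtuse := (norm_eq_iInf_iff_real_inner_le_zero hconvex hv).1 hnearest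
  have hvs : 0 < ‖v - s‖ := norm_pos_iff.2 (sub_ne_zero.2 fun h => hs (h ▸ hv))
  refine ⟨v - s, fun m hm => ?_⟩
  have hsplit : ⟪v - s, m - s⟫_ℝ = ‖v - s‖ ^ 2 - ⟪s - v, m - v⟫_ℝ := by
    rw [show m - s = (m - v) + (v - s) by abel, inner_add_right, real_inner_self_eq_norm_sq,
      ← neg_sub v s, inner_neg_left]
    ring
  nlinarith [hobtuse m hm]

theorem Set.Finite.mem_convexHull_iff_forall_exists_inner_sub_nonpos {K : Set E}
    (hK : K.Finite) {s : E} :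
    s ∈ convexHull ℝ K ↔ ∀ d : E, ∃ m ∈ K, ⟪d, m - s⟫_ℝ ≤ 0 := by
  constructor
  · intro hs d
    by_contra! hpos
    have hhalf : Convex ℝ {m : E | 0 < ⟪d, m - s⟫_ℝ} := by
      simp_rw [inner_sub_right, sub_pos]
      exact convex_halfSpace_gt (innerₗ E d).isLinear _
    have hself : 0 < ⟪d, s - s⟫_ℝ := convexHull_min hpos hhalf hs
    simp at hself
  · intro h
    by_contra hs
    obtain ⟨m₀, hm₀, -⟩ := h 0
    obtain ⟨d, hd⟩ := exists_forall_inner_sub_pos_of_notMem ⟨m₀, subset_convexHull ℝ K hm₀⟩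
      (hK.isCompact_convexHull ℝ).isComplete (convex_convexHull ℝ K) hs
    obtain ⟨m, hm, hle⟩ := h d
    exact (hd m (subset_convexHull ℝ K hm)).not_ge hle

theorem sum_norm_sub_sq_of_sum_eq_card_smul {ι : Type*} (s : Finset ι) (y : ι → E) {m : E}
    (hm : ∑ i ∈ s, y i = (#s : ℝ) • m) (t : E) :
    ∑ i ∈ s, ‖t - y i‖ ^ 2 = #s * ‖t - m‖ ^ 2 + ∑ i ∈ s, ‖m - y i‖ ^ 2 := by
  have hcross : ∑ i ∈ s, ⟪t - m, m - y i⟫_ℝ = 0 := by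
    rw [← inner_sum, sum_sub_distrib, sum_const, hm, Nat.cast_smul_eq_nsmul, sub_self,
      inner_zero_right]
  calc ∑ i ∈ s, ‖t - y i‖ ^ 2
      = ∑ i ∈ s, (‖t - m‖ ^ 2 + 2 * ⟪t - m, m - y i⟫_ℝ + ‖m - y i‖ ^ 2) := by
        refine sum_congr rfl fun i _ => ?_
        rw [← norm_add_sq_real, sub_add_sub_cancel]
    _ = #s * ‖t - m‖ ^ 2 + ∑ i ∈ s, ‖m - y i‖ ^ 2 := by
        rw [sum_add_distrib, sum_add_distrib, ← mul_sum, hcross, sum_const, nsmul_eq_mul]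
        ring

theorem sum_norm_sub_sq_add_norm_sub_sq {ι : Type*} [Fintype ι] (x : ι → E) (j : ι) {m : E}
    (hm : ((Fintype.card ι : ℝ) + 1) • m = x j + ∑ i, x i) (t : E) :
    ∑ i, ‖t - x i‖ ^ 2 + ‖t - x j‖ ^ 2 =
      ((Fintype.card ι : ℝ) + 1) * ‖t - m‖ ^ 2 + (∑ i, ‖m - x i‖ ^ 2 + ‖m - x j‖ ^ 2) := by
  have h := sum_norm_sub_sq_of_sum_eq_card_smul univ (fun o : Option ι => o.elim (x j) x)
    (m := m) (by simpa [Fintype.sum_option, add_comm] using hm.symm) t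
  simp only [Fintype.sum_option, card_univ, Fintype.card_option, Nat.cast_add, Nat.cast_one,
    Option.elim_none, Option.elim_some] at h
  linarith

end InnerProductSpace

theorem mem_convexHull_image_iff_exists_weights {R E ι : Type*} [Field R] [LinearOrder R]
    [IsStrictOrderedRing R] [AddCommGroup E] [Module R E] [Fintype ι] (M : ι → E) (A : Set ι)
    (y : E) :
    y ∈ convexHull R (M '' A) ↔ ∃ w : ι → R, (∀ j, 0 ≤ w j) ∧ ∑ j, w j = 1 ∧
      y = ∑ j, w j • M j ∧ ∀ j, 0 < w j → j ∈ A := by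
  classical
  constructor
  · refine fun hy => convexHull_min (t := {y | ∃ w : ι → R, (∀ j, 0 ≤ w j) ∧ ∑ j, w j = 1 ∧
      y = ∑ j, w j • M j ∧ ∀ j, 0 < w j → j ∈ A}) ?_ ?_ hy
    · rintro _ ⟨j, hj, rfl⟩
      refine ⟨fun i => if i = j then 1 else 0, fun i => by positivity, by simp, by simp, ?_⟩
      intro i hi
      rwa [show i = j by by_contra h; simp [h] at hi]
    · rintro _ ⟨w, hw0, hw1, rfl, hwA⟩ _ ⟨w', hw0', hw1', rfl, hwA'⟩ a b ha hb hab
      refine ⟨fun j => a * w j + b * w' j, fun j => by have := hw0 j; have := hw0' j; positivity,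
        ?_, ?_, ?_⟩
      · rw [sum_add_distrib, ← mul_sum, ← mul_sum, hw1, hw1', mul_one, mul_one, hab]
      · simp only [add_smul, mul_smul, sum_add_distrib, smul_sum]
      · intro j hj
        by_contra hjA
        have := hw0 j; have := hw0' j
        have : w j ≤ 0 := not_lt.1 fun h => hjA (hwA j h)
        have : w' j ≤ 0 := not_lt.1 fun h => hjA (hwA' j h)
        nlinarith
  · rintro ⟨w, hw0, hw1, rfl, hwA⟩
    have hsupp : ∀ j ∈ univ, w j ≠ 0 → 0 < w j := fun j _ h => (hw0 j).lt_of_ne' h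
    rw [← sum_filter_of_ne fun j hj h => hsupp j hj (left_ne_zero_of_smul h)]
    refine (convex_convexHull R _).sum_mem (fun j _ => hw0 j) ?_ fun j hj =>
      subset_convexHull R _ ⟨j, hwA j (mem_filter.1 hj).2, rfl⟩
    rwa [sum_filter_of_ne hsupp]

section EqualCurvature

variable {E ι : Type*} [NormedAddCommGroup E] [InnerProductSpace ℝ E]
  {q : ι → E → ℝ} {a : ℝ} {M : ι → E} {c : ι → ℝ}

theorem apply_eq_apply_add_of_eq_mul_norm_sub_sq
    (hq : ∀ j t, q j t = a * ‖t - M j‖ ^ 2 + c j) (j : ι) (s t : E) :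
    q j t = q j s + a * (‖t - s‖ ^ 2 - 2 * ⟪t - s, M j - s⟫_ℝ) := by
  rw [hq, hq, show t - M j = (t - s) - (M j - s) by abel, norm_sub_sq_real, ← neg_sub (M j) s,
    norm_neg]
  ring

variable [Fintype ι] [Nonempty ι]

theorem sup'_le_sup'_of_inner_sub_nonpos (ha : 0 ≤ a)
    (hq : ∀ j t, q j t = a * ‖t - M j‖ ^ 2 + c j) {s t : E} {j : ι}
    (hj : ∀ i, q i s ≤ q j s) (hjt : ⟪t - s, M j - s⟫_ℝ ≤ 0) :
    univ.sup' univ_nonempty (q · s) ≤ univ.sup' univ_nonempty (q · t) :=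
  calc univ.sup' univ_nonempty (q · s)
      ≤ q j s := sup'_le _ _ fun i _ => hj i
    _ ≤ q j t := by
        rw [apply_eq_apply_add_of_eq_mul_norm_sub_sq hq j s t]
        have : 0 ≤ a * (‖t - s‖ ^ 2 - 2 * ⟪t - s, M j - s⟫_ℝ) :=
          mul_nonneg ha (by nlinarith [sq_nonneg ‖t - s‖])
        linarith
    _ ≤ univ.sup' univ_nonempty (q · t) := le_sup' (q · t) (mem_univ j)

theorem exists_sup'_lt_of_forall_inner_sub_pos (ha : 0 < a)
    (hq : ∀ j t, q j t = a * ‖t - M j‖ ^ 2 + c j) {s d : E}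
    (hd : ∀ j, (∀ i, q i s ≤ q j s) → 0 < ⟪d, M j - s⟫_ℝ) :
    ∃ t, univ.sup' univ_nonempty (q · t) < univ.sup' univ_nonempty (q · s) := by
  have hdescent : ∀ j, ∀ᶠ ε in 𝓝[>] (0 : ℝ),
      q j (s + ε • d) < univ.sup' univ_nonempty (q · s) := by
    intro j
    by_cases hj : ∀ i, q i s ≤ q j s
    · have hslope : ∀ᶠ ε in 𝓝 (0 : ℝ), ε * ‖d‖ ^ 2 - 2 * ⟪d, M j - s⟫_ℝ < 0 :=
        ((continuous_id.mul continuous_const).sub continuous_const).tendsto' 0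
          (-(2 * ⟪d, M j - s⟫_ℝ)) (by simp)
          |>.eventually_lt_const (by linarith [hd j hj])
      filter_upwards [nhdsWithin_le_nhds hslope, self_mem_nhdsWithin] with ε hε (hε0 : 0 < ε)
      have hmax : univ.sup' univ_nonempty (q · s) = q j s :=
        le_antisymm (sup'_le _ _ fun i _ => hj i) (le_sup' (q · s) (mem_univ j))
      have hstep : q j (s + ε • d) =
          q j s + a * ε * (ε * ‖d‖ ^ 2 - 2 * ⟪d, M j - s⟫_ℝ) := by
        rw [apply_eq_apply_add_of_eq_mul_norm_sub_sq hq j s, add_sub_cancel_left, norm_smul,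
          mul_pow, Real.norm_eq_abs, sq_abs, real_inner_smul_left]
        ring
      rw [hmax, hstep]
      linarith [mul_neg_of_pos_of_neg (mul_pos ha hε0) hε]
    · simp only [not_forall, not_le] at hj
      obtain ⟨i, hji⟩ := hj
      have hcont : Continuous fun ε : ℝ => q j (s + ε • d) := by
        simp only [hq]
        fun_prop
      refine nhdsWithin_le_nhds <| (hcont.tendsto' 0 (q j s) (by simp)).eventually_lt_const ?_
      exact hji.trans_le (le_sup' (q · s) (mem_univ i))
  obtain ⟨ε, hε⟩ := (eventually_all.2 hdescent).exists
  exact ⟨s + ε • d, (sup'_lt_iff _).2 fun j _ => hε j⟩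

theorem forall_sup'_le_iff_mem_convexHull (ha : 0 < a)
    (hq : ∀ j t, q j t = a * ‖t - M j‖ ^ 2 + c j) (s : E) :
    (∀ t, univ.sup' univ_nonempty (q · s) ≤ univ.sup' univ_nonempty (q · t)) ↔
      s ∈ convexHull ℝ (M '' {j | ∀ i, q i s ≤ q j s}) := by
  rw [Set.Finite.mem_convexHull_iff_forall_exists_inner_sub_nonpos (Set.toFinite _)]
  simp only [Set.exists_mem_image]
  constructor
  · intro hmin d
    by_contra! hpos
    obtain ⟨t, ht⟩ := exists_sup'_lt_of_forall_inner_sub_pos ha hq hpos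
    exact (hmin t).not_gt ht
  · intro h t
    obtain ⟨j, hj, hjt⟩ := h (t - s)
    exact sup'_le_sup'_of_inner_sub_nonpos ha.le hq hj hjt

end EqualCurvature

/-- KKT characterisation: `s` minimises the quadratic min-power objective iff there are
nonnegative multipliers summing to 1 with `s = Σ λ_j M_j` and each positive `λ_j` only on
farthest points. -/
theorem minPower_centre_iff_KKT
    {n : ℕ} [NeZero n] (x : Fin n → EuclideanSpace ℝ (Fin 2))
    (P : EuclideanSpace ℝ (Fin 2) → ℝ)
    (hP : ∀ s, P s = (∑ i, ‖s - x i‖ ^ 2) +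
      Finset.univ.sup' Finset.univ_nonempty (fun i => ‖s - x i‖ ^ 2))
    (Mc : Fin n → EuclideanSpace ℝ (Fin 2))
    (hMc : ∀ j, Mc j = ((n : ℝ) + 1)⁻¹ • (x j + ∑ i, x i))
    (s : EuclideanSpace ℝ (Fin 2)) :
    (∀ t, P s ≤ P t) ↔
    ∃ lam : Fin n → ℝ, (∀ j, 0 ≤ lam j) ∧ (∑ j, lam j = 1) ∧
      s = ∑ j, lam j • Mc j ∧
      ∀ j, 0 < lam j →
        ‖s - x j‖ = Finset.univ.sup' Finset.univ_nonempty (fun i => ‖s - x i‖) := by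
  set q : Fin n → EuclideanSpace ℝ (Fin 2) → ℝ := fun j t => ∑ i, ‖t - x i‖ ^ 2 + ‖t - x j‖ ^ 2
  have hq : ∀ j t, q j t =
      ((n : ℝ) + 1) * ‖t - Mc j‖ ^ 2 + (∑ i, ‖Mc j - x i‖ ^ 2 + ‖Mc j - x j‖ ^ 2) := by
    intro j t
    simpa using sum_norm_sub_sq_add_norm_sub_sq x j
      (by rw [Fintype.card_fin, hMc, smul_inv_smul₀ (by positivity)]) t
  have hPq : ∀ t, P t = univ.sup' univ_nonempty (q · t) := fun t => by rw [hP, add_sup']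
  have hactive : ∀ j,
      (∀ i, q i s ≤ q j s) ↔ ‖s - x j‖ = univ.sup' univ_nonempty fun i => ‖s - x i‖ := by
    intro j
    simp only [q, add_le_add_iff_left, sq_le_sq₀ (norm_nonneg _) (norm_nonneg _)]
    exact ⟨fun h => le_antisymm (le_sup' (fun i => ‖s - x i‖) (mem_univ j))
        (sup'_le _ _ fun i _ => h i),
      fun h i => h ▸ le_sup' (fun i => ‖s - x i‖) (mem_univ i)⟩
  simp only [hPq]
  rw [forall_sup'_le_iff_mem_convexHull (by positivity) hq,
    mem_convexHull_image_iff_exists_weights]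
  simp only [Set.mem_ofPred_eq, hactive]
end

section
/- Let X = {x_1,...,x_n} ⊂ ℝ² and let s* minimise P(s) = Σ_i ‖s-x_i‖² + max_i ‖s-x_i‖². Then there exist nonnegative multipliers λ_1,...,λ_n summing to 1 with s* = Σ λ_j M_j, each λ_j > 0 only if ‖s*-x_j‖ = max_i ‖s*-x_i‖, and at most 3 of the λ_j are nonzero. -/
/-!
If the minimiser `s` were not a convex combination of the points `M_j` of its farthest sites
`x_j`, a line would separate `s` from them. Since `(n + 1) • (s - M_j) = (s - x_j) + ∑ i, (s - x_i)`
is half the gradient at `s` of the branch `∑ i, ‖· - x_i‖² + ‖· - x_j‖²` of `P`, moving `s`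
slightly towards the separated `M_j` strictly decreases every branch of a farthest site, while
the other branches stay below the maximum; so `P` decreases. Hence `s` lies in the convex hull
of those `M_j`, and Carathéodory's theorem in the plane selects at most three of them.
-/

open Finset Filter
open scoped RealInnerProductSpace Topology

section Caratheodory

variable {ι E : Type*} [Fintype ι] [AddCommGroup E] [Module ℝ E] [FiniteDimensional ℝ E]

theorem exists_weights_of_mem_convexHull_image (f : ι → E) (A : Set ι) {y : E}
    (hy : y ∈ convexHull ℝ (f '' A)) :
    ∃ lam : ι → ℝ, (∀ j, 0 ≤ lam j) ∧ ∑ j, lam j = 1 ∧ y = ∑ j, lam j • f j ∧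
      (∀ j, lam j ≠ 0 → j ∈ A) ∧ #{j | lam j ≠ 0} ≤ Module.finrank ℝ E + 1 := by
  classical
  obtain ⟨κ, _, z, w, hzA, hz, hw, hw1, hwy⟩ := eq_pos_convex_span_of_mem_convexHull hy
  choose g hgA hgz using fun k => hzA (Set.mem_range_self k)
  have hsupp : ∀ j, ∑ k ∈ {k | g k = j}, w k ≠ 0 → ∃ k, g k = j := fun j hj => by
    obtain ⟨k, hk, -⟩ := exists_ne_zero_of_sum_ne_zero hj
    exact ⟨k, (mem_filter.1 hk).2⟩
  refine ⟨fun j => ∑ k ∈ {k | g k = j}, w k, fun j => sum_nonneg fun k _ => (hw k).le,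
    (sum_fiberwise univ g w).trans hw1, ?_, fun j hj => ?_, ?_⟩
  · calc y = ∑ k, w k • f (g k) := by simp only [hgz, hwy]
      _ = ∑ j, ∑ k ∈ {k | g k = j}, w k • f j := by
          rw [← sum_fiberwise univ g]
          exact sum_congr rfl fun j _ => sum_congr rfl fun k hk => by rw [(mem_filter.1 hk).2]
      _ = _ := by simp only [sum_smul]
  · obtain ⟨k, rfl⟩ := hsupp j hj
    exact hgA k
  · calc #{j | ∑ k ∈ {k | g k = j}, w k ≠ 0} ≤ #(univ.image g) :=
          card_le_card fun j hj => by
            obtain ⟨k, rfl⟩ := hsupp j (mem_filter.1 hj).2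
            exact mem_image_of_mem g (mem_univ k)
      _ ≤ Fintype.card κ := card_image_le
      _ ≤ Module.finrank ℝ (vectorSpan ℝ (Set.range z)) + 1 := hz.card_le_finrank_succ
      _ ≤ Module.finrank ℝ E + 1 := by gcongr; exact Submodule.finrank_le _

end Caratheodory

theorem Finset.sq_sup'_of_nonneg {ι : Type*} {s : Finset ι} (hs : s.Nonempty) {f : ι → ℝ}
    (hf : ∀ i ∈ s, 0 ≤ f i) : s.sup' hs f ^ 2 = s.sup' hs (fun i => f i ^ 2) := by
  obtain ⟨j, hj, hjf⟩ := exists_mem_eq_sup' hs f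
  refine le_antisymm ?_ (sup'_le _ _ fun i hi => pow_le_pow_left₀ (hf i hi) (le_sup' f hi) 2)
  rw [hjf]
  exact le_sup' (fun i => f i ^ 2) hj

theorem eventually_add_mul_add_sq_lt {ι : Type*} [Finite ι] {a b : ι → ℝ} {M K : ℝ}
    (ha : ∀ i, a i ≤ M) (hb : ∀ i, a i = M → b i < 0) :
    ∀ᶠ t in 𝓝[>] 0, ∀ i, a i + t * b i + t ^ 2 * K < M := by
  refine eventually_all.2 fun i => (ha i).eq_or_lt.elim (fun hM => ?_) (fun hM => ?_)
  · have hslope : ∀ᶠ t in 𝓝 0, b i + t * K < 0 :=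
      ContinuousAt.eventually_lt (by fun_prop) continuousAt_const (by simpa using hb i hM)
    filter_upwards [self_mem_nhdsWithin, hslope.filter_mono nhdsWithin_le_nhds] with t ht hlt
    linarith [mul_neg_of_pos_of_neg ht hlt]
  · have hlt : ∀ᶠ t in 𝓝 0, a i + t * b i + t ^ 2 * K < M :=
      ContinuousAt.eventually_lt (by fun_prop) continuousAt_const (by simpa using hM)
    exact hlt.filter_mono nhdsWithin_le_nhds

section MinPower

variable {ι E : Type*} [Fintype ι] [NormedAddCommGroup E] [InnerProductSpace ℝ E]

theorem norm_add_smul_sub_sq (s w x : E) (t : ℝ) :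
    ‖s + t • w - x‖ ^ 2 = ‖s - x‖ ^ 2 + t * (2 * ⟪s - x, w⟫) + t ^ 2 * ‖w‖ ^ 2 := by
  rw [add_sub_right_comm, norm_add_sq_real, real_inner_smul_right, norm_smul, mul_pow,
    Real.norm_eq_abs, sq_abs]
  ring

theorem sub_add_sum_sub_eq_smul (x : ι → E) (s : E) (j : ι) :
    (s - x j) + ∑ i, (s - x i) =
      ((Fintype.card ι : ℝ) + 1) • (s - ((Fintype.card ι : ℝ) + 1)⁻¹ • (x j + ∑ i, x i)) := by
  rw [smul_sub, smul_inv_smul₀ (by positivity), sum_sub_distrib, sum_const, card_univ, add_smul,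
    one_smul, Nat.cast_smul_eq_nsmul]
  abel

theorem exists_inner_neg_of_notMem_convexHull [CompleteSpace E] {K : Set E} (hK : K.Finite)
    {s : E} (hs : s ∉ convexHull ℝ K) : ∃ w : E, ∀ k ∈ K, ⟪s - k, w⟫ < 0 := by
  obtain ⟨f, u, hfK, hus⟩ :=
    geometric_hahn_banach_closed_point (convex_convexHull ℝ K) (hK.isClosed_convexHull ℝ) hs
  refine ⟨-(InnerProductSpace.toDual ℝ E).symm f, fun k hk => ?_⟩
  rw [inner_neg_right, real_inner_comm, InnerProductSpace.toDual_symm_apply, map_sub]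
  linarith [hfK k (subset_convexHull ℝ K hk)]

variable [Nonempty ι]

def minPower (x : ι → E) (s : E) : ℝ :=
  ∑ i, ‖s - x i‖ ^ 2 + univ.sup' univ_nonempty (fun i => ‖s - x i‖ ^ 2)

theorem exists_minPower_lt_of_inner_neg (x : ι → E) (s w : E)
    (hw : ∀ j, ‖s - x j‖ = univ.sup' univ_nonempty (fun i => ‖s - x i‖) →
      ⟪s - x j, w⟫ + ∑ i, ⟪s - x i, w⟫ < 0) :
    ∃ t : ℝ, minPower x (s + t • w) < minPower x s := by
  set M := univ.sup' univ_nonempty (fun i => ‖s - x i‖ ^ 2)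
  have hM : ∀ i, ‖s - x i‖ ^ 2 ≤ M := fun i => le_sup' (fun i => ‖s - x i‖ ^ 2) (mem_univ i)
  have hactive : ∀ j, ‖s - x j‖ ^ 2 = M → ⟪s - x j, w⟫ + ∑ i, ⟪s - x i, w⟫ < 0 := by
    intro j hj
    have hsq : M = univ.sup' univ_nonempty (fun i => ‖s - x i‖) ^ 2 :=
      (sq_sup'_of_nonneg _ fun i _ => norm_nonneg _).symm
    rw [hsq] at hj
    exact hw j <| (sq_eq_sq₀ (norm_nonneg _)
      ((norm_nonneg _).trans (le_sup' (fun i => ‖s - x i‖) (mem_univ j)))).1 hj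
  obtain ⟨t, hdescent⟩ := (eventually_add_mul_add_sq_lt (a := fun i => ‖s - x i‖ ^ 2)
    (b := fun i => 2 * (⟪s - x i, w⟫ + ∑ k, ⟪s - x k, w⟫))
    (K := ((Fintype.card ι : ℝ) + 1) * ‖w‖ ^ 2) hM
    fun i hi => by linarith [hactive i hi]).exists
  have hsum : ∑ i, ‖s + t • w - x i‖ ^ 2 = ∑ i, ‖s - x i‖ ^ 2 + t * (2 * ∑ i, ⟪s - x i, w⟫) +
      Fintype.card ι * (t ^ 2 * ‖w‖ ^ 2) := by
    simp only [norm_add_smul_sub_sq, sum_add_distrib, ← mul_sum, sum_const, card_univ,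
      nsmul_eq_mul]
    ring
  have hsup : univ.sup' univ_nonempty (fun i => ‖s + t • w - x i‖ ^ 2) <
      M - t * (2 * ∑ i, ⟪s - x i, w⟫) - Fintype.card ι * (t ^ 2 * ‖w‖ ^ 2) :=
    (sup'_lt_iff _).2 fun i _ => by rw [norm_add_smul_sub_sq]; linarith [hdescent i]
  refine ⟨t, ?_⟩
  rw [minPower, minPower, hsum]
  linarith

theorem mem_convexHull_of_forall_minPower_le [CompleteSpace E] (x : ι → E) (s : E)
    (hs : ∀ t, minPower x s ≤ minPower x t) :
    s ∈ convexHull ℝ ((fun j => ((Fintype.card ι : ℝ) + 1)⁻¹ • (x j + ∑ i, x i)) ''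
      {j | ‖s - x j‖ = univ.sup' univ_nonempty (fun i => ‖s - x i‖)}) := by
  by_contra hs_notMem
  obtain ⟨w, hw⟩ := exists_inner_neg_of_notMem_convexHull (Set.toFinite _) hs_notMem
  obtain ⟨t, ht⟩ := exists_minPower_lt_of_inner_neg x s w fun j hj => by
    rw [← sum_inner, ← inner_add_left, sub_add_sum_sub_eq_smul, real_inner_smul_left]
    exact mul_neg_of_pos_of_neg (by positivity) (hw _ ⟨j, hj, rfl⟩)
  exact (hs _).not_gt ht

end MinPower

/-- There exists a KKT multiplier set for the quadratic min-power centre with at most 3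
nonzero multipliers. -/
theorem minPower_centre_KKT_at_most_three
    {n : ℕ} [NeZero n] (x : Fin n → EuclideanSpace ℝ (Fin 2))
    (P : EuclideanSpace ℝ (Fin 2) → ℝ)
    (hP : ∀ s, P s = (∑ i, ‖s - x i‖ ^ 2) +
      Finset.univ.sup' Finset.univ_nonempty (fun i => ‖s - x i‖ ^ 2))
    (Mc : Fin n → EuclideanSpace ℝ (Fin 2))
    (hMc : ∀ j, Mc j = ((n : ℝ) + 1)⁻¹ • (x j + ∑ i, x i))
    (s : EuclideanSpace ℝ (Fin 2)) (hs : ∀ t, P s ≤ P t) :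
    ∃ lam : Fin n → ℝ, (∀ j, 0 ≤ lam j) ∧ (∑ j, lam j = 1) ∧
      s = ∑ j, lam j • Mc j ∧
      (∀ j, 0 < lam j →
        ‖s - x j‖ = Finset.univ.sup' Finset.univ_nonempty (fun i => ‖s - x i‖)) ∧
      (Finset.univ.filter (fun j => lam j ≠ 0)).card ≤ 3 := by
  obtain rfl : P = minPower x := funext hP
  obtain rfl : Mc = fun j => ((Fintype.card (Fin n) : ℝ) + 1)⁻¹ • (x j + ∑ i, x i) := by
    simpa only [Fintype.card_fin] using funext hMc
  obtain ⟨lam, hlam₀, hlam₁, hs_eq, hactive, hcard⟩ :=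
    exists_weights_of_mem_convexHull_image _ _ (mem_convexHull_of_forall_minPower_le x s hs)
  exact ⟨lam, hlam₀, hlam₁, hs_eq, fun j hj => hactive j hj.ne',
    by simpa only [finrank_euclideanSpace_fin] using hcard⟩
end

section
/- Let X ⊂ ℝ² be finite with centroid M, 2-centroids M_j, and let x_r be a point of X farthest from M. If M_r lies in the farthest-point Voronoi cell of x_r (i.e., ‖M_r - x_r‖ ≥ ‖M_r - x_i‖ for all i), then M_r is the unique minimiser of P(s) = Σ_i ‖s-x_i‖² + max_i ‖s-x_i‖². -/
/-!
Write `Q t = ∑ i, ‖t - x i‖² + ‖t - x r‖²`. This is the sum of squared distances to the family `x`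
with `x r` counted twice, whose centroid is `M_r`, so by the parallel axis theorem
`Q t = Q M_r + (n + 1) ‖t - M_r‖²`. Always `P ≥ Q`, and `P M_r = Q M_r` because `x r` is a farthest
point from `M_r`; hence `P t ≥ P M_r + (n + 1) ‖t - M_r‖²`.
-/

open Finset

theorem sum_norm_sub_sq_eq_add_card_mul {ι E : Type*} [NormedAddCommGroup E]
    [InnerProductSpace ℝ E] (s : Finset ι) (y : ι → E) {c : E}
    (hc : (#s : ℝ) • c = ∑ i ∈ s, y i) (t : E) :
    ∑ i ∈ s, ‖t - y i‖ ^ 2 = ∑ i ∈ s, ‖c - y i‖ ^ 2 + #s * ‖t - c‖ ^ 2 := by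
  have hbalance : ∑ i ∈ s, (c - y i) = 0 := by
    rw [sum_sub_distrib, sum_const, ← Nat.cast_smul_eq_nsmul ℝ, hc, sub_self]
  have hsplit (i : ι) :
      ‖t - y i‖ ^ 2 = ‖t - c‖ ^ 2 + 2 * inner ℝ (t - c) (c - y i) + ‖c - y i‖ ^ 2 := by
    rw [← norm_add_sq_real, sub_add_sub_cancel]
  simp only [hsplit, sum_add_distrib, ← mul_sum, ← inner_sum, hbalance, inner_zero_right,
    sum_const, nsmul_eq_mul]
  ring

theorem forall_le_and_unique_of_add_mul_dist_sq_le {X : Type*} [MetricSpace X] {f : X → ℝ}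
    {c : X} {k : ℝ} (hk : 0 < k) (hf : ∀ t, f c + k * dist t c ^ 2 ≤ f t) :
    (∀ t, f c ≤ f t) ∧ ∀ s, (∀ t, f s ≤ f t) → s = c := by
  refine ⟨fun t => (le_add_of_nonneg_right (by positivity)).trans (hf t), fun s hs => ?_⟩
  have : k * dist s c ^ 2 ≤ 0 := by linarith [hf s, hs c]
  have : dist s c ^ 2 ≤ 0 := nonpos_of_mul_nonpos_right this hk
  exact dist_eq_zero.mp ((sq_nonpos_iff _).mp this)

theorem Mr_in_voronoi_implies_optimal_general
    {n : ℕ} [NeZero n] (x : Fin n → EuclideanSpace ℝ (Fin 2))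
    (r : Fin n)
    (Mr : EuclideanSpace ℝ (Fin 2)) (hMr : Mr = ((n : ℝ) + 1)⁻¹ • (x r + ∑ i, x i))
    (hvor : ∀ i, ‖Mr - x i‖ ≤ ‖Mr - x r‖)
    (P : EuclideanSpace ℝ (Fin 2) → ℝ)
    (hP : ∀ s, P s = (∑ i, ‖s - x i‖ ^ 2) +
      Finset.univ.sup' Finset.univ_nonempty (fun i => ‖s - x i‖ ^ 2)) :
    (∀ t, P Mr ≤ P t) ∧ (∀ s, (∀ t, P s ≤ P t) → s = Mr) := by
  let y : Option (Fin n) → EuclideanSpace ℝ (Fin 2) := fun o => o.elim (x r) x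
  have hcentroid : (#(univ : Finset (Option (Fin n))) : ℝ) • Mr = ∑ o, y o := by
    rw [hMr, card_univ, Fintype.card_option, Fintype.card_fin, Fintype.sum_option, smul_smul]
    push_cast
    rw [mul_inv_cancel₀ (by positivity), one_smul]
    rfl
  have hmaxMr : univ.sup' univ_nonempty (fun i => ‖Mr - x i‖ ^ 2) = ‖Mr - x r‖ ^ 2 :=
    le_antisymm (sup'_le _ _ fun i _ => by gcongr; exact hvor i)
      (le_sup' (fun i => ‖Mr - x i‖ ^ 2) (mem_univ r))
  refine forall_le_and_unique_of_add_mul_dist_sq_le (k := n + 1) (by positivity) fun t => ?_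
  have hparallel := sum_norm_sub_sq_eq_add_card_mul univ y hcentroid t
  simp only [y, Fintype.sum_option, Option.elim_none, Option.elim_some, card_univ,
    Fintype.card_option, Fintype.card_fin, Nat.cast_add, Nat.cast_one] at hparallel
  have hmax : ‖t - x r‖ ^ 2 ≤ univ.sup' univ_nonempty (fun i => ‖t - x i‖ ^ 2) :=
    le_sup' (fun i => ‖t - x i‖ ^ 2) (mem_univ r)
  rw [hP, hP, hmaxMr, dist_eq_norm]
  linarith

/-- If the 2-centroid `M_r` of a point `x_r` farthest from the centroid lies in the
farthest-point Voronoi cell of `x_r`, then `M_r` is the unique quadratic min-power centre. -/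
theorem Mr_in_voronoi_implies_optimal
    {n : ℕ} [NeZero n] (x : Fin n → EuclideanSpace ℝ (Fin 2))
    (M : EuclideanSpace ℝ (Fin 2)) (hM : M = (n : ℝ)⁻¹ • ∑ i, x i)
    (r : Fin n) (hr : ∀ i, ‖M - x i‖ ≤ ‖M - x r‖)
    (Mr : EuclideanSpace ℝ (Fin 2)) (hMr : Mr = ((n : ℝ) + 1)⁻¹ • (x r + ∑ i, x i))
    (hvor : ∀ i, ‖Mr - x i‖ ≤ ‖Mr - x r‖)
    (P : EuclideanSpace ℝ (Fin 2) → ℝ)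
    (hP : ∀ s, P s = (∑ i, ‖s - x i‖ ^ 2) +
      Finset.univ.sup' Finset.univ_nonempty (fun i => ‖s - x i‖ ^ 2)) :
    (∀ t, P Mr ≤ P t) ∧ (∀ s, (∀ t, P s ≤ P t) → s = Mr) :=
  Mr_in_voronoi_implies_optimal_general x r Mr hMr hvor P hP
end

section
/- Let X = {x_1,...,x_n} ⊂ ℝ² with 2-centroids M_j, and suppose the minimiser s* of P(s) = Σ_i ‖s-x_i‖² + max_i ‖s-x_i‖² satisfies ‖s* - x_j‖ > ‖s* - x_i‖ for all i ≠ j (strict farthest point). Then s* = M_j and x_j is a point of X farthest from the centroid M. -/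
/-!
Near `s*` the point `x_j` stays strictly farthest, so `P` agrees there with the smooth function
`t ↦ ∑ i, ‖t - x_i‖² + ‖t - x_j‖²`. Hence `s*` is a critical point of it, and its gradient
`2((n + 1) t - x_j - ∑ i, x_i)` vanishes only at `M_j`. Since `M_j` lies on the segment `[M, x_j]`,
the triangle inequality through `M_j` turns `‖M_j - x_i‖ ≤ ‖M_j - x_j‖` into
`‖M - x_i‖ ≤ ‖M - x_j‖`.
-/

open Finset Filter Topology

section Normed

variable {E : Type*} [SeminormedAddCommGroup E] {ι : Type*} [Fintype ι] [Nonempty ι]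

theorem sup'_norm_sub_sq_eventuallyEq (x : ι → E) {s : E} {j : ι}
    (hj : ∀ i, i ≠ j → ‖s - x i‖ < ‖s - x j‖) :
    (fun t => univ.sup' univ_nonempty fun i => ‖t - x i‖ ^ 2) =ᶠ[𝓝 s] fun t => ‖t - x j‖ ^ 2 := by
  have hfar : ∀ᶠ t in 𝓝 s, ∀ i, ‖t - x i‖ ≤ ‖t - x j‖ := by
    refine eventually_all.2 fun i => ?_
    rcases eq_or_ne i j with rfl | hi
    · exact .of_forall fun _ => le_rfl
    · exact (ContinuousAt.eventually_lt (by fun_prop) (by fun_prop) (hj i hi)).mono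
        fun _ => le_of_lt
  filter_upwards [hfar] with t ht
  exact le_antisymm (sup'_le _ _ fun i _ => by gcongr; exact ht i)
    (le_sup' (fun i => ‖t - x i‖ ^ 2) (mem_univ j))

variable [NormedSpace ℝ E]

theorem dist_le_dist_of_mem_segment {a b p z : E} (hp : p ∈ segment ℝ a b)
    (h : dist p z ≤ dist p b) : dist a z ≤ dist a b :=
  calc dist a z ≤ dist a p + dist p z := dist_triangle a p z
    _ ≤ dist a p + dist p b := by gcongr
    _ = dist a b := dist_add_dist_of_mem_segment hp

theorem inv_card_add_one_smul_mem_segment (x : ι → E) (j : ι) :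
    ((Fintype.card ι : ℝ) + 1)⁻¹ • (x j + ∑ i, x i) ∈
      segment ℝ ((Fintype.card ι : ℝ)⁻¹ • ∑ i, x i) (x j) := by
  refine ⟨Fintype.card ι / (Fintype.card ι + 1), 1 / (Fintype.card ι + 1), by positivity,
    by positivity, by field_simp, ?_⟩
  rw [smul_smul, smul_add, add_comm (_ • x j)]
  congr 1
  · field_simp
  · rw [one_div]

end Normed

section InnerProduct

variable {E : Type*} [NormedAddCommGroup E] [InnerProductSpace ℝ E] {ι : Type*} [Fintype ι]

theorem hasFDerivAt_sum_norm_sub_sq_add (x : ι → E) (j : ι) (s : E) :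
    HasFDerivAt (fun t => ∑ i, ‖t - x i‖ ^ 2 + ‖t - x j‖ ^ 2)
      (innerSL ℝ ((2 : ℝ) • (∑ i, (s - x i) + (s - x j)))) s := by
  have hsq (a : E) : HasFDerivAt (fun t => ‖t - a‖ ^ 2) (2 • innerSL ℝ (s - a)) s := by
    simpa using ((hasFDerivAt_id s).sub_const a).norm_sq
  refine ((HasFDerivAt.fun_sum fun i _ => hsq (x i)).fun_add (hsq (x j))).congr_fderiv ?_
  ext v
  simp [← Finset.mul_sum, sum_sub_distrib]

theorem eq_of_isLocalMin_sum_norm_sub_sq_add (x : ι → E) (j : ι) {s : E}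
    (h : IsLocalMin (fun t => ∑ i, ‖t - x i‖ ^ 2 + ‖t - x j‖ ^ 2) s) :
    s = ((Fintype.card ι : ℝ) + 1)⁻¹ • (x j + ∑ i, x i) := by
  have hgrad := h.hasFDerivAt_eq_zero (hasFDerivAt_sum_norm_sub_sq_add x j s)
  rw [← norm_eq_zero, innerSL_apply_norm, norm_eq_zero, smul_eq_zero,
    sum_sub_distrib, sum_const, card_univ, ← Nat.cast_smul_eq_nsmul ℝ] at hgrad
  rw [eq_inv_smul_iff₀ (by positivity), ← sub_eq_zero, ← hgrad.resolve_left two_ne_zero]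
  module

end InnerProduct

/-- If the quadratic min-power centre `s*` has a unique (strict) farthest point `x_j`,
then `s* = M_j` and `x_j` is a farthest point of `X` from the centroid `M`. -/
theorem strict_farthest_implies_centre_is_Mj
    {n : ℕ} [NeZero n] (x : Fin n → EuclideanSpace ℝ (Fin 2))
    (M : EuclideanSpace ℝ (Fin 2)) (hM : M = (n : ℝ)⁻¹ • ∑ i, x i)
    (Mc : Fin n → EuclideanSpace ℝ (Fin 2))
    (hMc : ∀ j, Mc j = ((n : ℝ) + 1)⁻¹ • (x j + ∑ i, x i))
    (P : EuclideanSpace ℝ (Fin 2) → ℝ)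
    (hP : ∀ s, P s = (∑ i, ‖s - x i‖ ^ 2) +
      Finset.univ.sup' Finset.univ_nonempty (fun i => ‖s - x i‖ ^ 2))
    (s : EuclideanSpace ℝ (Fin 2)) (hs : ∀ t, P s ≤ P t)
    (j : Fin n) (hstrict : ∀ i, i ≠ j → ‖s - x i‖ < ‖s - x j‖) :
    s = Mc j ∧ ∀ i, ‖M - x i‖ ≤ ‖M - x j‖ := by
  have hPF : P =ᶠ[𝓝 s] fun t => ∑ i, ‖t - x i‖ ^ 2 + ‖t - x j‖ ^ 2 := by
    filter_upwards [sup'_norm_sub_sq_eventuallyEq x hstrict] with t ht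
    rw [hP, ht]
  have hloc : IsLocalMin P s := .of_forall hs
  have hsMc : s = Mc j := by
    simpa [hMc] using eq_of_isLocalMin_sum_norm_sub_sq_add x j (hloc.congr hPF)
  have hseg : Mc j ∈ segment ℝ M (x j) := by
    simpa [hM, hMc] using inv_card_add_one_smul_mem_segment x j
  refine ⟨hsMc, fun i => ?_⟩
  rcases eq_or_ne i j with rfl | hi
  · rfl
  simpa only [dist_eq_norm] using dist_le_dist_of_mem_segment hseg
    (by simpa only [dist_eq_norm, ← hsMc] using (hstrict i hi).le)
end

section
/- Let X = {x_1,...,x_n} ⊂ ℝ², M its centroid, and s* the minimiser of P(s) = Σ_i ‖s-x_i‖² + max_i ‖s-x_i‖². Then M = s* if and only if M is the 1-centre of X (i.e., M minimises s ↦ max_i ‖s - x_i‖). -/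
/-!
By the parallel-axis identity, `P t = n ‖t - M‖² + C + h t` with `C` constant and
`h t = maxᵢ ‖t - xᵢ‖²`, a convex function whose minimisers are exactly the 1-centres.
If `M` is the 1-centre it minimises both variable terms, and the first one vanishes only at `M`,
so `M` is the minimiser of `P`. Conversely, if `M` minimises `P`, moving from `M` a fraction `ε`
towards any `t` changes the quadratic term by `O(ε²)` but decreases `h` by at least
`ε (h M - h t)`, so letting `ε → 0` gives `h M ≤ h t`.
-/

open Finset Set Filter Topology

theorem ConvexOn.finset_sup' {𝕜 E β ι : Type*} [Semiring 𝕜] [PartialOrder 𝕜] [AddCommMonoid E]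
    [AddCommMonoid β] [LinearOrder β] [IsOrderedAddMonoid β] [SMul 𝕜 E] [Module 𝕜 β]
    [PosSMulStrictMono 𝕜 β] {s : Set E} {t : Finset ι} (H : t.Nonempty) {f : ι → E → β}
    (hf : ∀ i ∈ t, ConvexOn 𝕜 s (f i)) : ConvexOn 𝕜 s fun x => t.sup' H fun i => f i x := by
  convert Finset.sup'_induction H f (p := ConvexOn 𝕜 s) (fun _ hg _ hg' => hg.sup hg') hf using 1
  ext x
  rw [Finset.sup'_apply]

theorem Finset.sup'_sq_le_sup'_sq_iff {ι : Type*} {t : Finset ι} (H : t.Nonempty) {f g : ι → ℝ}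
    (hf : ∀ i ∈ t, 0 ≤ f i) (hg : ∀ i ∈ t, 0 ≤ g i) :
    t.sup' H (fun i => f i ^ 2) ≤ t.sup' H (fun i => g i ^ 2) ↔ t.sup' H f ≤ t.sup' H g := by
  simp only [Finset.sup'_le_iff, Finset.le_sup'_iff]
  exact exists_congr fun j => and_congr_right fun hj => forall₂_congr fun i hi =>
    pow_le_pow_iff_left₀ (hf i hi) (hg j hj) two_ne_zero

section InnerProductSpace

variable {E ι : Type*} [NormedAddCommGroup E] [InnerProductSpace ℝ E] [Fintype ι]

theorem sum_norm_sub_sq_eq_card_mul_add [Nonempty ι] (x : ι → E) {c : E}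
    (hc : c = (Fintype.card ι : ℝ)⁻¹ • ∑ i, x i) (t : E) :
    ∑ i, ‖t - x i‖ ^ 2 = Fintype.card ι * ‖t - c‖ ^ 2 + ∑ i, ‖c - x i‖ ^ 2 := by
  have hsum : ∑ i, (c - x i) = 0 := by
    rw [Finset.sum_sub_distrib, Finset.sum_const, card_univ, ← Nat.cast_smul_eq_nsmul ℝ, hc,
      smul_smul, mul_inv_cancel₀ (Nat.cast_ne_zero.2 Fintype.card_ne_zero), one_smul, sub_self]
  have hsplit : ∀ i, ‖t - x i‖ ^ 2 = ‖t - c‖ ^ 2 + 2 * inner ℝ (t - c) (c - x i) + ‖c - x i‖ ^ 2 :=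
    fun i => by rw [← norm_add_sq_real, sub_add_sub_cancel]
  rw [Finset.sum_congr rfl fun i _ => hsplit i, Finset.sum_add_distrib, Finset.sum_add_distrib,
    ← Finset.mul_sum, ← inner_sum, hsum, inner_zero_right, mul_zero, add_zero, Finset.sum_const,
    card_univ, nsmul_eq_mul]

end InnerProductSpace

section NormedSpace

variable {E : Type*} [NormedAddCommGroup E] [NormedSpace ℝ E]

theorem convexOn_univ_norm_sub_sq (z : E) : ConvexOn ℝ univ fun x => ‖x - z‖ ^ 2 :=
  ((convexOn_univ_dist z).pow (fun _ _ => dist_nonneg) 2).congr fun x _ => by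
    rw [Pi.pow_apply, dist_eq_norm]

theorem ConvexOn.isMinOn_of_le_mul_norm_sub_sq_add {h : E → ℝ} (hh : ConvexOn ℝ univ h) {a : ℝ}
    {c : E} (hc : ∀ t, h c ≤ a * ‖t - c‖ ^ 2 + h t) : IsMinOn h univ c := by
  intro t _
  have hseg : ∀ ε ∈ Ioo (0 : ℝ) 1, h c ≤ ε * (a * ‖t - c‖ ^ 2) + h t := by
    rintro ε ⟨hε0, hε1⟩
    have hconv : h (c + ε • (t - c)) ≤ (1 - ε) * h c + ε * h t := by
      have := hh.2 (mem_univ c) (mem_univ t) (sub_nonneg.2 hε1.le) hε0.le (by ring)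
      rwa [show (1 - ε) • c + ε • t = c + ε • (t - c) by module, smul_eq_mul, smul_eq_mul] at this
    have hmin := hc (c + ε • (t - c))
    rw [add_sub_cancel_left, norm_smul, Real.norm_of_nonneg hε0.le] at hmin
    nlinarith
  have hlim : Tendsto (fun ε : ℝ => ε * (a * ‖t - c‖ ^ 2) + h t) (𝓝[>] 0) (𝓝 (h t)) := by
    have : Continuous fun ε : ℝ => ε * (a * ‖t - c‖ ^ 2) + h t := by fun_prop
    simpa using (this.tendsto 0).mono_left nhdsWithin_le_nhds
  exact ge_of_tendsto hlim (eventually_of_mem (Ioo_mem_nhdsGT one_pos) hseg)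

end NormedSpace

/-- The centroid `M` is the quadratic min-power centre iff `M` is the 1-centre of `X`. -/
theorem centroid_eq_minPower_iff_one_centre
    {n : ℕ} [NeZero n] (x : Fin n → EuclideanSpace ℝ (Fin 2))
    (M : EuclideanSpace ℝ (Fin 2)) (hM : M = (n : ℝ)⁻¹ • ∑ i, x i)
    (P : EuclideanSpace ℝ (Fin 2) → ℝ)
    (hP : ∀ s, P s = (∑ i, ‖s - x i‖ ^ 2) +
      Finset.univ.sup' Finset.univ_nonempty (fun i => ‖s - x i‖ ^ 2))
    (s : EuclideanSpace ℝ (Fin 2)) (hs : ∀ t, P s ≤ P t) :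
    M = s ↔
      (∀ t : EuclideanSpace ℝ (Fin 2),
        Finset.univ.sup' Finset.univ_nonempty (fun i => ‖M - x i‖) ≤
        Finset.univ.sup' Finset.univ_nonempty (fun i => ‖t - x i‖)) := by
  set h : EuclideanSpace ℝ (Fin 2) → ℝ := fun t => univ.sup' univ_nonempty fun i => ‖t - x i‖ ^ 2
  have hP_eq : ∀ t, P t = n * ‖t - M‖ ^ 2 + ∑ i, ‖M - x i‖ ^ 2 + h t := fun t => by
    rw [hP, sum_norm_sub_sq_eq_card_mul_add x (c := M) (by rwa [Fintype.card_fin]),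
      Fintype.card_fin]
  have hPM : P M = ∑ i, ‖M - x i‖ ^ 2 + h M := by simp [hP_eq]
  have h_one_centre : (∀ t, univ.sup' univ_nonempty (fun i => ‖M - x i‖) ≤
      univ.sup' univ_nonempty (fun i => ‖t - x i‖)) ↔ IsMinOn h univ M := by
    simp only [isMinOn_univ_iff, h, ← Finset.sup'_sq_le_sup'_sq_iff univ_nonempty
      (fun i _ => norm_nonneg (M - x i)) (fun i _ => norm_nonneg (_ - x i))]
  rw [h_one_centre]
  constructor
  · rintro rfl
    refine (ConvexOn.finset_sup' univ_nonempty fun i _ => convexOn_univ_norm_sub_sq (x i))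
      |>.isMinOn_of_le_mul_norm_sub_sq_add (a := n) fun t => ?_
    linarith [hs t, hP_eq t]
  · intro hmin
    have hn : (0 : ℝ) < n := Nat.cast_pos.2 (Nat.pos_of_ne_zero (NeZero.ne n))
    have hle : n * ‖s - M‖ ^ 2 ≤ 0 := by linarith [hs M, hP_eq s, hPM, isMinOn_univ_iff.1 hmin s]
    have hdist : ‖s - M‖ ^ 2 = 0 := by nlinarith [sq_nonneg ‖s - M‖]
    rw [sq_eq_zero_iff, norm_sub_eq_zero_iff] at hdist
    exact hdist.symm
end

section
/- Let X = {x_1,...,x_n} ⊂ ℝ² with centroid M. If s ∈ ℝ² can be written as s = Σ_j τ_j x_j with weights τ_j ≥ 1/(n+1) and Σ_j τ_j = 1, then s lies in the convex hull of the 2-centroids {M_1,...,M_n}, where M_j = (1/(n+1))(x_j + Σ_i x_i). -/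
/-!
The coefficients `σⱼ = (n + 1) τⱼ - 1` are nonnegative exactly when `τⱼ ≥ 1/(n+1)`, they sum to
`1` when the `τⱼ` do, and `∑ σⱼ Mⱼ = ∑ τⱼ xⱼ`. So `s` is a convex combination of the `Mⱼ`.
-/

open Finset

def twoCentroid (𝕜 : Type*) {E ι : Type*} [Field 𝕜] [AddCommGroup E] [Module 𝕜 E] [Fintype ι]
    (x : ι → E) (j : ι) : E :=
  ((Fintype.card ι : 𝕜) + 1)⁻¹ • (x j + ∑ i, x i)

section

variable {𝕜 E ι : Type*} [Fintype ι]

theorem sum_rescaled_weights [CommRing 𝕜] {τ : ι → 𝕜} (hτ : ∑ j, τ j = 1) :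
    ∑ j, ((Fintype.card ι + 1) * τ j - 1) = 1 := by
  simp only [sum_sub_distrib, ← mul_sum, hτ, sum_const, card_univ, nsmul_eq_mul]
  ring

theorem sum_rescaled_smul_twoCentroid [Field 𝕜] [CharZero 𝕜] [AddCommGroup E] [Module 𝕜 E]
    (x : ι → E) {τ : ι → 𝕜} (hτ : ∑ j, τ j = 1) :
    ∑ j, ((Fintype.card ι + 1) * τ j - 1) • twoCentroid 𝕜 x j = ∑ j, τ j • x j := by
  have hN : (Fintype.card ι : 𝕜) + 1 ≠ 0 := Nat.cast_add_one_ne_zero _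
  have hcoef : ∀ j, ((Fintype.card ι + 1) * τ j - 1) * ((Fintype.card ι : 𝕜) + 1)⁻¹ =
      τ j - ((Fintype.card ι : 𝕜) + 1)⁻¹ := fun j => by field_simp
  have hNc : (Fintype.card ι : 𝕜) * ((Fintype.card ι : 𝕜) + 1)⁻¹ =
      1 - ((Fintype.card ι : 𝕜) + 1)⁻¹ := by field_simp; ring
  simp only [twoCentroid, smul_smul, hcoef, smul_add, sum_add_distrib, ← sum_smul,
    sum_sub_distrib, hτ, sub_smul, sum_const, card_univ, nsmul_eq_mul, ← smul_sum, one_smul, hNc]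
  abel

theorem sum_smul_mem_convexHull_twoCentroid [Field 𝕜] [LinearOrder 𝕜] [IsStrictOrderedRing 𝕜]
    [AddCommGroup E] [Module 𝕜 E] (x : ι → E) {τ : ι → 𝕜}
    (hτ_ge : ∀ j, ((Fintype.card ι : 𝕜) + 1)⁻¹ ≤ τ j) (hτ : ∑ j, τ j = 1) :
    ∑ j, τ j • x j ∈ convexHull 𝕜 (Set.range (twoCentroid 𝕜 x)) := by
  rw [← sum_rescaled_smul_twoCentroid x hτ]
  refine (convex_convexHull 𝕜 _).sum_mem (fun j _ => ?_) (sum_rescaled_weights hτ)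
    (fun j _ => subset_convexHull 𝕜 _ (Set.mem_range_self j))
  have h := hτ_ge j
  rw [inv_le_iff_one_le_mul₀ (by positivity)] at h
  linarith

end

theorem weights_ge_implies_mem_convexHull_two_centroids_general
    {n : ℕ} (x : Fin n → EuclideanSpace ℝ (Fin 2))
    (Mc : Fin n → EuclideanSpace ℝ (Fin 2))
    (hMc : ∀ j, Mc j = ((n : ℝ) + 1)⁻¹ • (x j + ∑ i, x i))
    (τ : Fin n → ℝ) (hτ : ∀ j, 1 / ((n : ℝ) + 1) ≤ τ j) (hsum : ∑ j, τ j = 1)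
    (s : EuclideanSpace ℝ (Fin 2)) (hseq : s = ∑ j, τ j • x j) :
    s ∈ convexHull ℝ (Set.range Mc) := by
  obtain rfl : Mc = twoCentroid ℝ x := funext fun j => by simp [twoCentroid, hMc]
  subst hseq
  exact sum_smul_mem_convexHull_twoCentroid x (fun j => by simpa using hτ j) hsum

/-- If `s = Σ τ_j x_j` with affine weights `τ_j ≥ 1/(n+1)`, then `s` lies in the convex hull
of the 2-centroids. -/
theorem weights_ge_implies_mem_convexHull_two_centroids
    {n : ℕ} [NeZero n] (x : Fin n → EuclideanSpace ℝ (Fin 2))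
    (Mc : Fin n → EuclideanSpace ℝ (Fin 2))
    (hMc : ∀ j, Mc j = ((n : ℝ) + 1)⁻¹ • (x j + ∑ i, x i))
    (τ : Fin n → ℝ) (hτ : ∀ j, 1 / ((n : ℝ) + 1) ≤ τ j) (hsum : ∑ j, τ j = 1)
    (s : EuclideanSpace ℝ (Fin 2)) (hseq : s = ∑ j, τ j • x j) :
    s ∈ convexHull ℝ (Set.range Mc) :=
  weights_ge_implies_mem_convexHull_two_centroids_general x Mc hMc τ hτ hsum s hseq
end

section
/- Let X = {x_1,...,x_n} ⊂ ℝ² with centroid M, let s* minimise P(s) = Σ_i ‖s-x_i‖² + max_i ‖s-x_i‖², and let k be the number of indices j attaining max_i ‖s*-x_i‖. Then P(M)/P(s*) ≤ (1/(k+1))·((n+1)/n)² + k/(k+1). -/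
set_option maxHeartbeats 1000000

open Finset RealInnerProductSpace

/-- Performance bound for the centroid as an approximation of the quadratic min-power centre:
`P(M)/P(s*) ≤ (1/(k+1))((n+1)/n)² + k/(k+1)`, where `k` is the number of farthest points
from `s*`. -/
theorem centroid_approx_ratio_bound
    {n : ℕ} [NeZero n] (x : Fin n → EuclideanSpace ℝ (Fin 2))
    (hne : ∃ i j, x i ≠ x j)
    (M : EuclideanSpace ℝ (Fin 2)) (hM : M = (n : ℝ)⁻¹ • ∑ i, x i)
    (P : EuclideanSpace ℝ (Fin 2) → ℝ)
    (hP : ∀ s, P s = (∑ i, ‖s - x i‖ ^ 2) +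
      Finset.univ.sup' Finset.univ_nonempty (fun i => ‖s - x i‖ ^ 2))
    (s : EuclideanSpace ℝ (Fin 2)) (hs : ∀ t, P s ≤ P t)
    (k : ℕ)
    (hk : k = (Finset.univ.filter (fun j =>
      ‖s - x j‖ = Finset.univ.sup' Finset.univ_nonempty (fun i => ‖s - x i‖))).card) :
    P M / P s ≤ (1 / ((k : ℝ) + 1)) * (((n : ℝ) + 1) / n) ^ 2 + (k : ℝ) / ((k : ℝ) + 1) := by
  classical
  have hn0 : (n : ℝ) ≠ 0 := Nat.cast_ne_zero.mpr (NeZero.ne n)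
  have hn : (0 : ℝ) < n := by
    have := Nat.pos_of_ne_zero (NeZero.ne n); exact_mod_cast this
  set r : ℝ := Finset.univ.sup' Finset.univ_nonempty (fun i => ‖s - x i‖) with hr
  have hrle : ∀ i, ‖s - x i‖ ≤ r := fun i => Finset.le_sup' (fun i => ‖s - x i‖) (Finset.mem_univ i)
  obtain ⟨i0⟩ : Nonempty (Fin n) := ⟨⟨0, Nat.pos_of_ne_zero (NeZero.ne n)⟩⟩
  have hr0 : 0 ≤ r := le_trans (norm_nonneg _) (hrle i0)
  -- sup' of squares is square of sup'
  have hsupsq : ∀ t : EuclideanSpace ℝ (Fin 2),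
      Finset.univ.sup' Finset.univ_nonempty (fun i => ‖t - x i‖ ^ 2)
      = (Finset.univ.sup' Finset.univ_nonempty fun i => ‖t - x i‖) ^ 2 := by
    intro t
    obtain ⟨j, -, hj⟩ := Finset.exists_mem_eq_sup' Finset.univ_nonempty (fun i => ‖t - x i‖)
    apply le_antisymm
    · apply Finset.sup'_le
      intro i _
      exact pow_le_pow_left₀ (norm_nonneg _)
        (Finset.le_sup' (fun i => ‖t - x i‖) (Finset.mem_univ i)) 2
    · rw [hj]
      exact Finset.le_sup' (fun i => ‖t - x i‖ ^ 2) (Finset.mem_univ j)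
  -- the centroid identity
  have hsum0 : ∑ i, (M - x i) = 0 := by
    have h1 : ∑ i : Fin n, (M - x i) = (n : ℕ) • M - ∑ i, x i := by
      rw [Finset.sum_sub_distrib, Finset.sum_const, Finset.card_univ, Fintype.card_fin]
    rw [h1, ← Nat.cast_smul_eq_nsmul ℝ, hM, smul_inv_smul₀ hn0, sub_self]
  -- parallel axis theorem
  have hpar : ∀ t : EuclideanSpace ℝ (Fin 2),
      ∑ i, ‖t - x i‖ ^ 2 = (∑ i, ‖M - x i‖ ^ 2) + n * ‖t - M‖ ^ 2 := by
    intro t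
    have h1 : ∀ i : Fin n, ‖t - x i‖ ^ 2
        = ‖t - M‖ ^ 2 + 2 * ⟪t - M, M - x i⟫ + ‖M - x i‖ ^ 2 := by
      intro i
      have h : t - x i = (t - M) + (M - x i) := by abel
      rw [h, norm_add_sq_real]
    calc ∑ i, ‖t - x i‖ ^ 2
        = ∑ i, (‖t - M‖ ^ 2 + 2 * ⟪t - M, M - x i⟫ + ‖M - x i‖ ^ 2) := by
          exact Finset.sum_congr rfl fun i _ => h1 i
      _ = (n : ℝ) * ‖t - M‖ ^ 2 + 2 * ⟪t - M, ∑ i, (M - x i)⟫ + ∑ i, ‖M - x i‖ ^ 2 := by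
          rw [Finset.sum_add_distrib, Finset.sum_add_distrib, Finset.sum_const,
            Finset.card_univ, Fintype.card_fin, ← Finset.mul_sum, ← inner_sum,
            nsmul_eq_mul]
      _ = (∑ i, ‖M - x i‖ ^ 2) + n * ‖t - M‖ ^ 2 := by
          rw [hsum0, inner_zero_right]; ring
  set d : ℝ := ‖s - M‖ with hd
  have hd0 : 0 ≤ d := norm_nonneg _
  -- key step inequality for perturbations towards the centroid
  have hstep : ∀ ε : ℝ, 0 < ε → ε ≤ 1 →
      2 * n * d ^ 2 ≤ 2 * r * d + ε * ((n : ℝ) + 1) * d ^ 2 := by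
    intro ε hε hε1
    set t := s + ε • (M - s) with ht
    have htM : ‖t - M‖ = (1 - ε) * d := by
      have h : t - M = (1 - ε) • (s - M) := by
        rw [ht]; module
      rw [h, norm_smul, Real.norm_eq_abs, abs_of_nonneg (by linarith : (0:ℝ) ≤ 1 - ε)]
    have htx : ∀ i, ‖t - x i‖ ≤ r + ε * d := by
      intro i
      have h : t - x i = (s - x i) + ε • (M - s) := by rw [ht]; abel
      rw [h]
      calc ‖(s - x i) + ε • (M - s)‖ ≤ ‖s - x i‖ + ‖ε • (M - s)‖ := norm_add_le _ _
        _ ≤ r + ε * d := by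
            rw [norm_smul, Real.norm_eq_abs, abs_of_pos hε, norm_sub_rev M s]
            exact add_le_add (hrle i) le_rfl
    have hsupt : (Finset.univ.sup' Finset.univ_nonempty fun i => ‖t - x i‖) ≤ r + ε * d :=
      Finset.sup'_le _ _ fun i _ => htx i
    have hsupt0 : 0 ≤ (Finset.univ.sup' Finset.univ_nonempty fun i => ‖t - x i‖) :=
      le_trans (norm_nonneg _) (Finset.le_sup' (fun i => ‖t - x i‖) (Finset.mem_univ i0))
    have hsupt2 : (Finset.univ.sup' Finset.univ_nonempty fun i => ‖t - x i‖) ^ 2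
        ≤ (r + ε * d) ^ 2 := pow_le_pow_left₀ hsupt0 hsupt 2
    have hPs := hs t
    rw [hP s, hP t, hsupsq, hsupsq, hpar s, hpar t, htM] at hPs
    -- from hPs : ... + n*d^2 + r^2 ≤ ... + n*((1-ε)*d)^2 + sup'^2
    have h2 : ε * 0 ≤ ε * (2 * r * d + ε * ((n : ℝ) + 1) * d ^ 2 - 2 * n * d ^ 2) := by
      nlinarith [hPs, hsupt2]
    have h3 := le_of_mul_le_mul_left h2 hε
    linarith
  -- conclude n * d ≤ r
  have hnd : (n : ℝ) * d ≤ r := by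
    have hlim : 2 * n * d ^ 2 ≤ 2 * r * d := by
      apply le_of_forall_pos_le_add
      intro δ hδ
      set ε : ℝ := min 1 (δ / (((n : ℝ) + 1) * d ^ 2 + 1)) with hε
      have hden : (0:ℝ) < ((n : ℝ) + 1) * d ^ 2 + 1 := by positivity
      have hεpos : 0 < ε := lt_min one_pos (div_pos hδ hden)
      have hε1 : ε ≤ 1 := min_le_left _ _
      have h4 := hstep ε hεpos hε1
      have h5 : ε * (((n : ℝ) + 1) * d ^ 2) ≤ δ := by
        have h6 : ε ≤ δ / (((n : ℝ) + 1) * d ^ 2 + 1) := min_le_right _ _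
        have h7 : 0 ≤ ((n : ℝ) + 1) * d ^ 2 := by positivity
        calc ε * (((n : ℝ) + 1) * d ^ 2)
            ≤ (δ / (((n : ℝ) + 1) * d ^ 2 + 1)) * (((n : ℝ) + 1) * d ^ 2) := by
              exact mul_le_mul_of_nonneg_right h6 h7
          _ ≤ δ := by
              rw [div_mul_eq_mul_div, div_le_iff₀ hden]
              nlinarith
      nlinarith
    rcases eq_or_lt_of_le hd0 with h | h
    · rw [← h]; simpa using hr0
    · nlinarith
  -- the sum is at least k * r^2
  have hkr : (k : ℝ) * r ^ 2 ≤ ∑ i, ‖s - x i‖ ^ 2 := by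
    have h1 : ∑ j ∈ Finset.univ.filter (fun j => ‖s - x j‖ = r), ‖s - x j‖ ^ 2
        = (k : ℝ) * r ^ 2 := by
      rw [Finset.sum_congr rfl (fun j hj => by rw [(Finset.mem_filter.mp hj).2]),
        Finset.sum_const, hk, nsmul_eq_mul]
    rw [← h1]
    exact Finset.sum_le_sum_of_subset_of_nonneg (Finset.subset_univ _)
      (fun i _ _ => sq_nonneg _)
  -- r is positive
  have hrpos : 0 < r := by
    rcases eq_or_lt_of_le hr0 with h | h
    · exfalso
      obtain ⟨i, j, hij⟩ := hne
      have h1 : ‖s - x i‖ = 0 := le_antisymm (h ▸ hrle i) (norm_nonneg _)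
      have h2 : ‖s - x j‖ = 0 := le_antisymm (h ▸ hrle j) (norm_nonneg _)
      rw [norm_eq_zero, sub_eq_zero] at h1 h2
      exact hij (h1 ▸ h2)
    · exact h
  -- P s is positive
  have hsum_nonneg : 0 ≤ ∑ i, ‖s - x i‖ ^ 2 := Finset.sum_nonneg fun i _ => sq_nonneg _
  have hPs_eq : P s = (∑ i, ‖s - x i‖ ^ 2) + r ^ 2 := by rw [hP s, hsupsq]
  have hPspos : 0 < P s := by rw [hPs_eq]; nlinarith
  -- bound on P M
  set c : ℝ := (((n : ℝ) + 1) / n) ^ 2 with hc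
  have hsupM : (Finset.univ.sup' Finset.univ_nonempty fun i => ‖M - x i‖) ≤ r + d := by
    apply Finset.sup'_le
    intro i _
    calc ‖M - x i‖ = ‖(M - s) + (s - x i)‖ := by rw [sub_add_sub_cancel]
      _ ≤ ‖M - s‖ + ‖s - x i‖ := norm_add_le _ _
      _ ≤ d + r := by rw [norm_sub_rev]; exact add_le_add le_rfl (hrle i)
      _ = r + d := by ring
  have hsupM0 : 0 ≤ (Finset.univ.sup' Finset.univ_nonempty fun i => ‖M - x i‖) :=
    le_trans (norm_nonneg _) (Finset.le_sup' (fun i => ‖M - x i‖) (Finset.mem_univ i0))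
  have hrd : r + d ≤ ((n : ℝ) + 1) / n * r := by
    have : d ≤ r / n := by rw [le_div_iff₀ hn]; linarith [hnd]
    rw [div_mul_eq_mul_div, le_div_iff₀ hn]
    nlinarith
  have hsupM2 : (Finset.univ.sup' Finset.univ_nonempty fun i => ‖M - x i‖) ^ 2 ≤ c * r ^ 2 := by
    have h1 : (Finset.univ.sup' Finset.univ_nonempty fun i => ‖M - x i‖) ^ 2
        ≤ (((n : ℝ) + 1) / n * r) ^ 2 :=
      pow_le_pow_left₀ hsupM0 (le_trans hsupM hrd) 2
    calc _ ≤ (((n : ℝ) + 1) / n * r) ^ 2 := h1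
      _ = c * r ^ 2 := by rw [hc]; ring
  have hsumM_le : ∑ i, ‖M - x i‖ ^ 2 ≤ ∑ i, ‖s - x i‖ ^ 2 := by
    have := hpar s
    nlinarith [sq_nonneg d]
  have hPM : P M ≤ P s + (c - 1) * r ^ 2 := by
    rw [hP M, hsupsq, hPs_eq]
    have := hsupM2
    linarith [hsumM_le]
  have hc1 : 1 ≤ c := by
    rw [hc]
    have h1 : (1 : ℝ) ≤ ((n : ℝ) + 1) / n := by
      rw [le_div_iff₀ hn]; linarith
    nlinarith
  have hk1 : (0 : ℝ) < (k : ℝ) + 1 := by positivity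
  have hkP : ((k : ℝ) + 1) * r ^ 2 ≤ P s := by
    rw [hPs_eq]; linarith [hkr]
  -- final combination
  rw [div_le_iff₀ hPspos]
  have hfinal : P M ≤ (c + k) / ((k : ℝ) + 1) * P s := by
    have h1 : (c - 1) * r ^ 2 ≤ (c - 1) * (P s / ((k : ℝ) + 1)) := by
      apply mul_le_mul_of_nonneg_left _ (by linarith)
      rw [le_div_iff₀ hk1]; linarith [hkP]
    calc P M ≤ P s + (c - 1) * r ^ 2 := hPM
      _ ≤ P s + (c - 1) * (P s / ((k : ℝ) + 1)) := by linarith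
      _ = (c + k) / ((k : ℝ) + 1) * P s := by field_simp; ring
  calc P M ≤ (c + k) / ((k : ℝ) + 1) * P s := hfinal
    _ = (1 / ((k : ℝ) + 1) * c + (k : ℝ) / ((k : ℝ) + 1)) * P s := by
        field_simp
    _ = (1 / ((k : ℝ) + 1) * (((n : ℝ) + 1) / n) ^ 2 + (k : ℝ) / ((k : ℝ) + 1)) * P s := by
        rw [hc]
end

section
/- Let X ⊂ ℝ² be a finite set with at least two distinct points, let C be the 1-centre of X (minimiser of max_{x∈X}‖s-x‖), and for α > 1 let s_α* be the unique minimiser of P_α(s,X) = Σ_{x∈X}‖s-x‖^α + max_{x∈X}‖s-x‖^α. Then s_α* → C as α → ∞. -/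
open Filter Real

set_option maxHeartbeats 1000000 in
/-- As `α → ∞`, the α-min-power centre tends to the 1-centre `C` of `X`. -/
theorem alpha_minPower_centre_tendsto_one_centre
    {n : ℕ} [NeZero n] (x : Fin n → EuclideanSpace ℝ (Fin 2))
    (hdist : ∃ i j, x i ≠ x j)
    (C : EuclideanSpace ℝ (Fin 2))
    (hC : ∀ t : EuclideanSpace ℝ (Fin 2),
      Finset.univ.sup' Finset.univ_nonempty (fun i => ‖C - x i‖) ≤
      Finset.univ.sup' Finset.univ_nonempty (fun i => ‖t - x i‖))
    (s : ℝ → EuclideanSpace ℝ (Fin 2))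
    (hs : ∀ α : ℝ, 1 < α → ∀ t : EuclideanSpace ℝ (Fin 2),
      (∑ i, ‖s α - x i‖ ^ α) +
        Finset.univ.sup' Finset.univ_nonempty (fun i => ‖s α - x i‖ ^ α) ≤
      (∑ i, ‖t - x i‖ ^ α) +
        Finset.univ.sup' Finset.univ_nonempty (fun i => ‖t - x i‖ ^ α)) :
    Filter.Tendsto s Filter.atTop (nhds C) := by
  classical
  set R : EuclideanSpace ℝ (Fin 2) → ℝ :=
    fun t => Finset.univ.sup' Finset.univ_nonempty (fun i => ‖t - x i‖) with hRdef
  set r : ℝ := R C with hrdef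
  have hr0 : 0 ≤ r :=
    le_trans (norm_nonneg (C - x 0))
      (Finset.le_sup' (fun i => ‖C - x i‖) (Finset.mem_univ (0 : Fin n)))
  -- the bound function
  set f : ℝ → ℝ := fun α => Real.sqrt (2 * (((((n : ℝ) + 1) ^ α⁻¹) * r) ^ 2 - r ^ 2))
    with hfdef
  -- main quantitative bound
  have hbound : ∀ α : ℝ, 1 < α → ‖s α - C‖ ≤ f α := by
    intro α hα
    have hα0 : (0 : ℝ) < α := lt_trans one_pos hα
    -- Step 1 : R (s α) ^ α ≤ (n+1) * r ^ α
    have h1 : R (s α) ^ α ≤ ((n : ℝ) + 1) * r ^ α := by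
      obtain ⟨i₀, -, hi₀⟩ :=
        Finset.exists_mem_eq_sup' Finset.univ_nonempty (fun i => ‖s α - x i‖)
      have hsum0 : (0 : ℝ) ≤ ∑ i, ‖s α - x i‖ ^ α :=
        Finset.sum_nonneg fun i _ => Real.rpow_nonneg (norm_nonneg _) _
      have hsupP : (‖s α - x i₀‖ : ℝ) ^ α ≤
          Finset.univ.sup' Finset.univ_nonempty (fun i => ‖s α - x i‖ ^ α) :=
        Finset.le_sup' (fun i => ‖s α - x i‖ ^ α) (Finset.mem_univ i₀)
      have hPC : (∑ i, ‖C - x i‖ ^ α) +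
          Finset.univ.sup' Finset.univ_nonempty (fun i => ‖C - x i‖ ^ α) ≤
          ((n : ℝ) + 1) * r ^ α := by
        have hterm : ∀ i : Fin n, ‖C - x i‖ ^ α ≤ r ^ α := fun i =>
          Real.rpow_le_rpow (norm_nonneg _)
            (Finset.le_sup' (fun i => ‖C - x i‖) (Finset.mem_univ i)) hα0.le
        have hsum : (∑ i, ‖C - x i‖ ^ α) ≤ (n : ℝ) * r ^ α := by
          calc (∑ i, ‖C - x i‖ ^ α) ≤ ∑ _i : Fin n, r ^ α :=
                Finset.sum_le_sum fun i _ => hterm i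
            _ = (n : ℝ) * r ^ α := by
                simp [Finset.sum_const, nsmul_eq_mul]
        have hsup : Finset.univ.sup' Finset.univ_nonempty
            (fun i => ‖C - x i‖ ^ α) ≤ r ^ α :=
          Finset.sup'_le _ _ fun i _ => hterm i
        nlinarith
      have hmin := hs α hα C
      calc R (s α) ^ α = ‖s α - x i₀‖ ^ α := by
            exact congrArg (fun z : ℝ => z ^ α) hi₀
        _ ≤ (∑ i, ‖s α - x i‖ ^ α) +
            Finset.univ.sup' Finset.univ_nonempty (fun i => ‖s α - x i‖ ^ α) := by
            linarith
        _ ≤ _ := hmin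
        _ ≤ ((n : ℝ) + 1) * r ^ α := hPC
    -- Step 2 : R (s α) ≤ (n+1) ^ α⁻¹ * r
    have hRs0 : 0 ≤ R (s α) :=
      le_trans (norm_nonneg (s α - x 0))
        (Finset.le_sup' (fun i => ‖s α - x i‖) (Finset.mem_univ (0 : Fin n)))
    have hn1 : (0 : ℝ) ≤ (n : ℝ) + 1 := by positivity
    have h2 : R (s α) ≤ ((n : ℝ) + 1) ^ α⁻¹ * r := by
      have h3 := Real.rpow_le_rpow (Real.rpow_nonneg hRs0 α) h1
        (le_of_lt (inv_pos.mpr hα0))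
      rwa [Real.rpow_rpow_inv hRs0 hα0.ne',
        Real.mul_rpow hn1 (Real.rpow_nonneg hr0 α),
        Real.rpow_rpow_inv hr0 hα0.ne'] at h3
    -- Step 3 : midpoint argument
    set m : EuclideanSpace ℝ (Fin 2) := (2 : ℝ)⁻¹ • (s α + C) with hmdef
    obtain ⟨j₀, -, hj₀⟩ :=
      Finset.exists_mem_eq_sup' Finset.univ_nonempty (fun i => ‖m - x i‖)
    have hrm : r ≤ ‖m - x j₀‖ := by
      have := hC m
      rw [hj₀] at this
      exact this
    have hmsub : m - x j₀ = (2 : ℝ)⁻¹ • ((s α - x j₀) + (C - x j₀)) := by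
      rw [hmdef]; module
    have hpar : ‖m - x j₀‖ ^ 2 =
        (‖s α - x j₀‖ ^ 2 + ‖C - x j₀‖ ^ 2) / 2 - ‖s α - C‖ ^ 2 / 4 := by
      have hp := parallelogram_law_with_norm ℝ (s α - x j₀) (C - x j₀)
      have hsub : s α - x j₀ - (C - x j₀) = s α - C := by abel
      rw [hsub] at hp
      have hnorm : ‖m - x j₀‖ = (2 : ℝ)⁻¹ * ‖(s α - x j₀) + (C - x j₀)‖ := by
        rw [hmsub, norm_smul]
        norm_num
      rw [hnorm]
      nlinarith [norm_nonneg ((s α - x j₀) + (C - x j₀))]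
    have hAX : ‖s α - x j₀‖ ≤ ((n : ℝ) + 1) ^ α⁻¹ * r :=
      le_trans (Finset.le_sup' (fun i => ‖s α - x i‖) (Finset.mem_univ j₀)) h2
    have hCX : ‖C - x j₀‖ ≤ r :=
      Finset.le_sup' (fun i => ‖C - x i‖) (Finset.mem_univ j₀)
    have hkey : ‖s α - C‖ ^ 2 ≤ 2 * ((((n : ℝ) + 1) ^ α⁻¹ * r) ^ 2 - r ^ 2) := by
      have h4 : r ^ 2 ≤ ‖m - x j₀‖ ^ 2 := by nlinarith
      nlinarith [norm_nonneg (s α - x j₀), norm_nonneg (C - x j₀), norm_nonneg (s α - C)]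
    have hgoal : ‖s α - C‖ ≤ Real.sqrt (2 * ((((n : ℝ) + 1) ^ α⁻¹ * r) ^ 2 - r ^ 2)) := by
      rw [Real.le_sqrt (norm_nonneg _) (le_trans (sq_nonneg _) hkey)]
      exact hkey
    exact hgoal
  -- limit of the bound
  have hf0 : Tendsto f atTop (nhds 0) := by
    have h1 : Tendsto (fun α : ℝ => ((n : ℝ) + 1) ^ α⁻¹) atTop (nhds 1) := by
      have hc : ContinuousAt (fun y : ℝ => ((n : ℝ) + 1) ^ y) 0 :=
        Real.continuousAt_const_rpow (by positivity)
      have := hc.tendsto.comp tendsto_inv_atTop_zero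
      simpa only [Function.comp_def, Real.rpow_zero] using this
    have hcont : Continuous (fun u : ℝ => Real.sqrt (2 * ((u * r) ^ 2 - r ^ 2))) :=
      Real.continuous_sqrt.comp
        (continuous_const.mul (((continuous_id.mul continuous_const).pow 2).sub
          continuous_const))
    have h2 := (hcont.tendsto 1).comp h1
    have heq : ((fun u : ℝ => Real.sqrt (2 * ((u * r) ^ 2 - r ^ 2))) ∘
        fun α : ℝ => ((n : ℝ) + 1) ^ α⁻¹) = f := rfl
    have hval : Real.sqrt (2 * (((1 : ℝ) * r) ^ 2 - r ^ 2)) = 0 := by norm_num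
    rw [heq, hval] at h2
    exact h2
  -- conclude
  rw [tendsto_iff_norm_sub_tendsto_zero]
  apply squeeze_zero' (Filter.Eventually.of_forall fun α => norm_nonneg _) _ hf0
  filter_upwards [Filter.eventually_gt_atTop (1 : ℝ)] with α hα
  exact hbound α hα
end
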